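/- arXiv:2409.04887 — 3 statements merged into one kernel-verified Lean document; each statement's English description precedes it below -/
import Mathlib

section
/- Joint dissatisfaction: let Γ and Δ be sets of 𝓛-formulas such that for every ψ ∈ Δ there exist a polarity-based model M_ψ and an object a' of M_ψ with M_ψ,a' ⊮ ψ and M_ψ,a' ⊩ φ for all φ ∈ Γ. Then there exist a single polarity-based model M and an object a of M such that M,a ⊮ ψ for every ψ ∈ Δ and M,a ⊩ φ for every φ ∈ Γ. The analogous statement holds for features and the co-satisfaction relation ≻. -/
namespace DR

/-- Formulas of the lattice-based language 𝓛: variables, ⊥, ⊤, ∧, ∨. -/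
inductive Fm : Type where
  | var : ℕ → Fm
  | bot : Fm
  | top : Fm
  | and : Fm → Fm → Fm
  | or  : Fm → Fm → Fm

/-- A polarity (formal context) (A, X, I). -/
structure Polarity : Type 1 where
  Obj : Type
  Feat : Type
  I : Obj → Feat → Prop

namespace Polarity

variable (P : Polarity)

def up (B : Set P.Obj) : Set P.Feat := {x | ∀ b ∈ B, P.I b x}
def dn (Y : Set P.Feat) : Set P.Obj := {a | ∀ y ∈ Y, P.I a y}

lemma subset_dn_up (B : Set P.Obj) : B ⊆ P.dn (P.up B) :=
  fun _ ha _ hx => hx _ ha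

lemma subset_up_dn (Y : Set P.Feat) : Y ⊆ P.up (P.dn Y) :=
  fun _ hx _ ha => ha _ hx

lemma up_anti {B C : Set P.Obj} (h : B ⊆ C) : P.up C ⊆ P.up B :=
  fun _ hx b hb => hx b (h hb)

lemma dn_anti {Y Z : Set P.Feat} (h : Y ⊆ Z) : P.dn Z ⊆ P.dn Y :=
  fun _ ha y hy => ha y (h hy)

end Polarity

/-- A formal concept of a polarity: a Galois-stable pair (extension, intension). -/
structure Concept (P : Polarity) : Type where
  ext : Set P.Obj
  int : Set P.Feat
  up_ext : P.up ext = int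
  dn_int : P.dn int = ext

namespace Concept

variable {P : Polarity}

/-- Lattice meet of concepts: extensions intersect. -/
def meet (c d : Concept P) : Concept P where
  ext := c.ext ∩ d.ext
  int := P.up (c.ext ∩ d.ext)
  up_ext := rfl
  dn_int := by
    apply Set.Subset.antisymm
    · intro a ha
      constructor
      · rw [← c.dn_int]
        intro y hy
        apply ha
        rw [← c.up_ext] at hy
        exact P.up_anti Set.inter_subset_left hy
      · rw [← d.dn_int]
        intro y hy
        apply ha
        rw [← d.up_ext] at hy
        exact P.up_anti Set.inter_subset_right hy
    · exact P.subset_dn_up _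

/-- Lattice join of concepts: intensions intersect. -/
def join (c d : Concept P) : Concept P where
  ext := P.dn (c.int ∩ d.int)
  int := c.int ∩ d.int
  up_ext := by
    apply Set.Subset.antisymm
    · intro x hx
      constructor
      · rw [← c.up_ext]
        intro b hb
        apply hx
        rw [← c.dn_int] at hb
        exact P.dn_anti Set.inter_subset_left hb
      · rw [← d.up_ext]
        intro b hb
        apply hx
        rw [← d.dn_int] at hb
        exact P.dn_anti Set.inter_subset_right hb
    · exact P.subset_up_dn _
  dn_int := rfl

/-- The greatest concept. -/
def top (P : Polarity) : Concept P where
  ext := Set.univ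
  int := P.up Set.univ
  up_ext := rfl
  dn_int := Set.eq_univ_of_univ_subset (P.subset_dn_up _)

/-- The least concept. -/
def bot (P : Polarity) : Concept P where
  ext := P.dn Set.univ
  int := Set.univ
  up_ext := Set.eq_univ_of_univ_subset (P.subset_up_dn _)
  dn_int := rfl

end Concept

/-- A polarity-based model: a polarity with a valuation of variables into concepts. -/
structure Model : Type 1 where
  P : Polarity
  V : ℕ → Concept P

namespace Model

/-- Homomorphic extension of the valuation to all formulas. -/
def interp (M : Model) : Fm → Concept M.P
  | .var n => M.V n
  | .bot => Concept.bot M.P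
  | .top => Concept.top M.P
  | .and φ ψ => Concept.meet (M.interp φ) (M.interp ψ)
  | .or φ ψ => Concept.join (M.interp φ) (M.interp ψ)

/-- M, a ⊩ φ : the object a is in the extension of φ. -/
def objSat (M : Model) (a : M.P.Obj) (φ : Fm) : Prop := a ∈ (M.interp φ).ext

/-- M, x ≻ φ : the feature x is in the intension of φ. -/
def featSat (M : Model) (x : M.P.Feat) (φ : Fm) : Prop := x ∈ (M.interp φ).int

end Model

/-- Validity of the sequent φ ⊢ ψ: in every polarity-based model the
extension of φ is contained in the extension of ψ. -/
def SeqValid (φ ψ : Fm) : Prop :=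
  ∀ M : Model, (M.interp φ).ext ⊆ (M.interp ψ).ext

/-- A conceptual cumulative consequence relation: reflexive and closed
under (LLE), (RW), (CM) and (Cut). -/
structure IsCumulative (R : Fm → Fm → Prop) : Prop where
  refl : ∀ φ, R φ φ
  lle : ∀ φ ψ χ, SeqValid φ ψ → SeqValid ψ φ → R φ χ → R ψ χ
  rw : ∀ φ ψ χ, SeqValid φ ψ → R χ φ → R χ ψ
  cm : ∀ φ ψ χ, R φ ψ → R φ χ → R (Fm.and φ ψ) χ
  cut : ∀ φ ψ χ, R (Fm.and φ ψ) χ → R φ ψ → R φ χ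

/-- Closure under the rule (Loop). -/
def LoopClosed (R : Fm → Fm → Prop) : Prop :=
  ∀ (n : ℕ) (φ : ℕ → Fm),
    (∀ i < n, R (φ i) (φ (i + 1))) → R (φ n) (φ 0) → R (φ 0) (φ n)

/-- A pointed polarity-based model. -/
structure PointedModel : Type 1 where
  M : Model
  pt : M.P.Obj

/-- Satisfaction at a pointed model. -/
def PointedModel.sat (Ma : PointedModel) (φ : Fm) : Prop := Ma.M.objSat Ma.pt φ

/-- A pointed model is normal for φ iff it satisfies every plausible consequence of φ. -/
def NormalFor (R : Fm → Fm → Prop) (Ma : PointedModel) (φ : Fm) : Prop :=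
  ∀ ψ, R φ ψ → Ma.sat ψ

/-- A pointed model is supernormal for φ. -/
def SupernormalFor (R : Fm → Fm → Prop) (Ma : PointedModel) (φ : Fm) : Prop :=
  ∀ ψ, R φ ψ ↔ Ma.sat ψ

/-- A frame (S, l, ≺): states labelled by sets of pointed polarity-based
models with a preference relation. -/
structure Frame : Type 2 where
  S : Type
  l : S → Set PointedModel
  prec : S → S → Prop

/-- t is minimal in P (w.r.t. prec). -/
def MinimalIn {α : Type _} (prec : α → α → Prop) (P : Set α) (t : α) : Prop :=
  t ∈ P ∧ ∀ s ∈ P, ¬ prec s t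

/-- t is a minimum of P (w.r.t. prec). -/
def IsMinimum {α : Type _} (prec : α → α → Prop) (P : Set α) (t : α) : Prop :=
  t ∈ P ∧ ∀ s ∈ P, s ≠ t → prec t s

/-- P is smooth (w.r.t. prec). -/
def Smooth {α : Type _} (prec : α → α → Prop) (P : Set α) : Prop :=
  ∀ t ∈ P, MinimalIn prec P t ∨ ∃ s, MinimalIn prec P s ∧ prec s t

namespace Frame

/-- s ⊨ φ : every pointed model in l(s) satisfies φ. -/
def stateSat (F : Frame) (s : F.S) (φ : Fm) : Prop :=
  ∀ Ma ∈ F.l s, Ma.sat φ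

/-- φ̂ : the set of states satisfying φ. -/
def hat (F : Frame) (φ : Fm) : Set F.S := {s | F.stateSat s φ}

/-- A conceptual cumulative model: φ̂ is smooth for every φ. -/
def IsCumulativeModel (F : Frame) : Prop :=
  ∀ φ : Fm, Smooth F.prec (F.hat φ)

/-- The consequence relation |~_𝓜 defined by a frame: every state minimal
in φ̂ belongs to ψ̂. -/
def conseq (F : Frame) (φ ψ : Fm) : Prop :=
  ∀ s, MinimalIn F.prec (F.hat φ) s → s ∈ F.hat ψ

/-- Replace the preference relation of a frame. -/
def withPrec (F : Frame) (p : F.S → F.S → Prop) : Frame := ⟨F.S, F.l, p⟩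

end Frame

/-- The equivalence class φ/∼ of φ under ∼ (φ ∼ ψ iff φ |~ ψ and ψ |~ φ). -/
def cls (R : Fm → Fm → Prop) (φ : Fm) : Set Fm := {ψ | R φ ψ ∧ R ψ φ}

/-- φ/∼ ≤ ψ/∼ : there is χ ∈ φ/∼ with ψ |~ χ (ψ any representative of ψ/∼). -/
def clsLE (R : Fm → Fm → Prop) (C D : Set Fm) : Prop :=
  ∃ χ ∈ C, ∃ ψ ∈ D, R ψ χ

/-- The canonical model of a consequence relation: states are the
equivalence classes φ/∼, labelled by the normal pointed models for φ,
with φ/∼ ≺ ψ/∼ iff φ/∼ ≤ ψ/∼ and φ/∼ ≠ ψ/∼. -/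
def canonicalFrame (R : Fm → Fm → Prop) : Frame where
  S := {C : Set Fm // ∃ φ, C = cls R φ}
  l := fun s => {Ma | ∃ φ, s.val = cls R φ ∧ NormalFor R Ma φ}
  prec := fun s t => clsLE R s.val t.val ∧ s ≠ t

/-- The state φ/∼ of the canonical model. -/
def canonicalState (R : Fm → Fm → Prop) (φ : Fm) : (canonicalFrame R).S :=
  ⟨cls R φ, φ, rfl⟩


/-! ### Auxiliary machinery for joint dissatisfaction -/

lemma Concept.eq_of_ext {P : Polarity} {c d : Concept P} (h : c.ext = d.ext) : c = d := by
  obtain ⟨e1, i1, u1, d1⟩ := c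
  obtain ⟨e2, i2, u2, d2⟩ := d
  simp only at h
  subst h
  simp only [Concept.mk.injEq, true_and]
  exact u1.symm.trans u2

section Prod

variable {ι : Type} (P : ι → Polarity)

/-- Product polarity: objects are families of optional objects (the `none`
component acting as a local total object), features are the disjoint union. -/
def prodPol : Polarity where
  Obj := ∀ i, Option (P i).Obj
  Feat := Σ i, (P i).Feat
  I := fun a x => ∀ b ∈ a x.1, (P x.1).I b x.2

def prodExt (E : ∀ i, Set (P i).Obj) : Set (prodPol P).Obj :=
  {a | ∀ i, ∀ b ∈ a i, b ∈ E i}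

def sigInt (X : ∀ i, Set (P i).Feat) : Set (prodPol P).Feat :=
  {x | x.2 ∈ X x.1}

lemma up_prodExt (E : ∀ i, Set (P i).Obj) :
    (prodPol P).up (prodExt P E) = sigInt P (fun i => (P i).up (E i)) := by
  classical
  ext ⟨i, x⟩
  show _ ↔ x ∈ (P i).up (E i)
  constructor
  · intro h b hb
    set a : ∀ j, Option (P j).Obj :=
      Function.update (fun j => (none : Option (P j).Obj)) i (some b) with ha
    have hmem : a ∈ prodExt P E := by
      intro j b' hb'
      by_cases h' : j = i
      · subst h'
        rw [ha, Function.update_self] at hb'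
        rw [Option.mem_def, Option.some_inj] at hb'
        exact hb' ▸ hb
      · rw [ha, Function.update_of_ne h'] at hb'
        cases hb'
    have heq : b ∈ a i := by
      rw [ha, Function.update_self]
      rfl
    exact h a hmem b heq
  · intro h a ha b hb
    exact h b (ha i b hb)

lemma dn_sigInt (X : ∀ i, Set (P i).Feat) :
    (prodPol P).dn (sigInt P X) = prodExt P (fun i => (P i).dn (X i)) := by
  ext a
  constructor
  · intro h i b hb x hx
    exact h ⟨i, x⟩ hx b hb
  · intro h ⟨i, x⟩ hx b hb
    exact h i b hb x hx

lemma prodExt_inter (E F : ∀ i, Set (P i).Obj) :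
    prodExt P E ∩ prodExt P F = prodExt P (fun i => E i ∩ F i) := by
  ext a
  constructor
  · rintro ⟨h1, h2⟩ i b hb
    exact ⟨h1 i b hb, h2 i b hb⟩
  · intro h
    exact ⟨fun i b hb => (h i b hb).1, fun i b hb => (h i b hb).2⟩

lemma sigInt_inter (X Y : ∀ i, Set (P i).Feat) :
    sigInt P X ∩ sigInt P Y = sigInt P (fun i => X i ∩ Y i) := rfl

lemma prodExt_univ : prodExt P (fun _ => Set.univ) = Set.univ := by
  ext a
  simp [prodExt]

lemma sigInt_univ : sigInt P (fun _ => Set.univ) = Set.univ := by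
  ext x
  simp [sigInt]

/-- The product of a family of concepts is a concept of the product polarity. -/
def prodConcept (c : ∀ i, Concept (P i)) : Concept (prodPol P) where
  ext := prodExt P (fun i => (c i).ext)
  int := sigInt P (fun i => (c i).int)
  up_ext := by
    rw [up_prodExt]
    exact congrArg (sigInt P) (funext fun i => (c i).up_ext)
  dn_int := by
    rw [dn_sigInt]
    exact congrArg (prodExt P) (funext fun i => (c i).dn_int)

variable {P}

lemma prodConcept_meet (c d : ∀ i, Concept (P i)) :
    Concept.meet (prodConcept P c) (prodConcept P d)
      = prodConcept P (fun i => Concept.meet (c i) (d i)) :=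
  Concept.eq_of_ext (prodExt_inter P _ _)

lemma prodConcept_join (c d : ∀ i, Concept (P i)) :
    Concept.join (prodConcept P c) (prodConcept P d)
      = prodConcept P (fun i => Concept.join (c i) (d i)) := by
  apply Concept.eq_of_ext
  show (prodPol P).dn (sigInt P (fun i => (c i).int) ∩ sigInt P (fun i => (d i).int)) = _
  rw [sigInt_inter, dn_sigInt]
  rfl

lemma prodConcept_top :
    Concept.top (prodPol P) = prodConcept P (fun i => Concept.top (P i)) :=
  Concept.eq_of_ext (prodExt_univ P).symm

lemma prodConcept_bot :
    Concept.bot (prodPol P) = prodConcept P (fun i => Concept.bot (P i)) := by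
  apply Concept.eq_of_ext
  show (prodPol P).dn Set.univ = _
  rw [← sigInt_univ P, dn_sigInt]
  rfl

end Prod

/-- Product of a family of models. -/
def prodModel {ι : Type} (M : ι → Model) : Model where
  P := prodPol (fun i => (M i).P)
  V := fun n => prodConcept _ (fun i => (M i).V n)

lemma prodModel_interp {ι : Type} (M : ι → Model) (φ : Fm) :
    (prodModel M).interp φ = prodConcept _ (fun i => (M i).interp φ) := by
  induction φ with
  | var n => rfl
  | bot => exact prodConcept_bot
  | top => exact prodConcept_top
  | and φ ψ ihφ ihψ =>
      show Concept.meet _ _ = _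
      rw [ihφ, ihψ]
      exact prodConcept_meet _ _
  | or φ ψ ihφ ihψ =>
      show Concept.join _ _ = _
      rw [ihφ, ihψ]
      exact prodConcept_join _ _

/-- The object part of the joint dissatisfaction theorem. -/
lemma joint_dissat_obj (Γ Δ : Set Fm)
    (h : ∀ ψ ∈ Δ, ∃ (M : Model) (a : M.P.Obj),
        ¬ M.objSat a ψ ∧ ∀ φ ∈ Γ, M.objSat a φ) :
    ∃ (M : Model) (a : M.P.Obj),
      (∀ ψ ∈ Δ, ¬ M.objSat a ψ) ∧ ∀ φ ∈ Γ, M.objSat a φ := by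
  choose M a h1 h2 using fun i : ↥Δ => h i.1 i.2
  refine ⟨prodModel M, fun i => some (a i), ?_, ?_⟩
  · intro ψ hψ hsat
    apply h1 ⟨ψ, hψ⟩
    unfold Model.objSat at hsat ⊢
    rw [prodModel_interp] at hsat
    exact hsat ⟨ψ, hψ⟩ (a ⟨ψ, hψ⟩) rfl
  · intro φ hφ
    unfold Model.objSat
    rw [prodModel_interp]
    intro i b hb
    cases hb
    exact h2 i φ hφ

/-! ### Duality: flipping polarities to handle the feature case -/

/-- The dual formula: swaps ∧/∨ and ⊥/⊤. -/
def Fm.dual : Fm → Fm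
  | .var n => .var n
  | .bot => .top
  | .top => .bot
  | .and φ ψ => .or φ.dual ψ.dual
  | .or φ ψ => .and φ.dual ψ.dual

lemma Fm.dual_dual (φ : Fm) : φ.dual.dual = φ := by
  induction φ with
  | var n => rfl
  | bot => rfl
  | top => rfl
  | and φ ψ ihφ ihψ => show Fm.and _ _ = _; rw [ihφ, ihψ]
  | or φ ψ ihφ ihψ => show Fm.or _ _ = _; rw [ihφ, ihψ]

/-- The flipped polarity (X, A, I⁻¹). -/
def Polarity.flip (P : Polarity) : Polarity := ⟨P.Feat, P.Obj, fun x a => P.I a x⟩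

/-- A concept of P gives a concept of the flipped polarity. -/
def Concept.flip {P : Polarity} (c : Concept P) : Concept P.flip where
  ext := c.int
  int := c.ext
  up_ext := c.dn_int
  dn_int := c.up_ext

lemma Concept.flip_meet {P : Polarity} (c d : Concept P) :
    Concept.meet c.flip d.flip = (Concept.join c d).flip :=
  Concept.eq_of_ext rfl

lemma Concept.flip_join {P : Polarity} (c d : Concept P) :
    Concept.join c.flip d.flip = (Concept.meet c d).flip :=
  Concept.eq_of_ext rfl

lemma Concept.flip_top {P : Polarity} :
    Concept.top P.flip = (Concept.bot P).flip :=
  Concept.eq_of_ext rfl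

lemma Concept.flip_bot {P : Polarity} :
    Concept.bot P.flip = (Concept.top P).flip :=
  Concept.eq_of_ext rfl

/-- The flipped model. -/
def Model.flip (M : Model) : Model := ⟨M.P.flip, fun n => (M.V n).flip⟩

lemma Model.flip_interp (M : Model) (φ : Fm) :
    M.flip.interp φ = (M.interp φ.dual).flip := by
  induction φ with
  | var n => rfl
  | bot => exact Concept.flip_bot
  | top => exact Concept.flip_top
  | and φ ψ ihφ ihψ =>
      show Concept.meet _ _ = _
      rw [ihφ, ihψ]
      exact Concept.flip_meet _ _
  | or φ ψ ihφ ihψ =>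
      show Concept.join _ _ = _
      rw [ihφ, ihψ]
      exact Concept.flip_join _ _

lemma featSat_flip (M : Model) (x : M.P.Feat) (φ : Fm) :
    M.featSat x φ ↔ M.flip.objSat x φ.dual := by
  unfold Model.featSat Model.objSat
  rw [Model.flip_interp, Fm.dual_dual]
  exact Iff.rfl

lemma objSat_flip (M : Model) (a : M.P.Obj) (φ : Fm) :
    M.flip.featSat a φ ↔ M.objSat a φ.dual := by
  unfold Model.featSat Model.objSat
  rw [Model.flip_interp]
  exact Iff.rfl

/-- joint dissatisfaction, for objects (⊩) and for features (≻). -/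
theorem joint_dissatisfaction :
    (∀ (Γ Δ : Set Fm),
      (∀ ψ ∈ Δ, ∃ (M : Model) (a : M.P.Obj),
        ¬ M.objSat a ψ ∧ ∀ φ ∈ Γ, M.objSat a φ) →
      ∃ (M : Model) (a : M.P.Obj),
        (∀ ψ ∈ Δ, ¬ M.objSat a ψ) ∧ ∀ φ ∈ Γ, M.objSat a φ)
    ∧
    (∀ (Γ Δ : Set Fm),
      (∀ ψ ∈ Δ, ∃ (M : Model) (x : M.P.Feat),
        ¬ M.featSat x ψ ∧ ∀ φ ∈ Γ, M.featSat x φ) →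
      ∃ (M : Model) (x : M.P.Feat),
        (∀ ψ ∈ Δ, ¬ M.featSat x ψ) ∧ ∀ φ ∈ Γ, M.featSat x φ) := by
  constructor
  · exact joint_dissat_obj
  · intro Γ Δ h
    have hyp : ∀ ψ' ∈ Fm.dual '' Δ, ∃ (M : Model) (a : M.P.Obj),
        ¬ M.objSat a ψ' ∧ ∀ φ' ∈ Fm.dual '' Γ, M.objSat a φ' := by
      rintro ψ' ⟨ψ, hψ, rfl⟩
      obtain ⟨N, x, hx1, hx2⟩ := h ψ hψ
      refine ⟨N.flip, x, ?_, ?_⟩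
      · rw [← featSat_flip]
        exact hx1
      · rintro φ' ⟨φ, hφ, rfl⟩
        rw [← featSat_flip]
        exact hx2 φ hφ
    obtain ⟨M, a, hΔ, hΓ⟩ := joint_dissat_obj (Fm.dual '' Γ) (Fm.dual '' Δ) hyp
    refine ⟨M.flip, a, ?_, ?_⟩
    · intro ψ hψ
      rw [objSat_flip]
      exact hΔ ψ.dual ⟨ψ, hψ, rfl⟩
    · intro φ hφ
      rw [objSat_flip]
      exact hΓ φ.dual ⟨φ, hφ, rfl⟩

end DR
end

section
/- Let |~ be a conceptual cumulative consequence relation and 𝓜 = (S,l,≺) its canonical model. Then for any formula φ, the state φ/∼ is the minimum of φ̂, i.e., φ/∼ ∈ φ̂ and φ/∼ ≺ s for every s ∈ φ̂ with s ≠ φ/∼. -/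
namespace DR

/-! ### Auxiliary semantic lemmas -/

lemma sv_refl (φ : Fm) : SeqValid φ φ := fun _ => le_refl _

lemma sv_trans {φ ψ χ : Fm} (h1 : SeqValid φ ψ) (h2 : SeqValid ψ χ) :
    SeqValid φ χ := fun M => (h1 M).trans (h2 M)

lemma sv_top (φ : Fm) : SeqValid φ .top := fun _ _ _ => trivial

lemma sv_bot (φ : Fm) : SeqValid .bot φ := by
  intro M a ha
  show a ∈ (M.interp φ).ext
  rw [← (M.interp φ).dn_int]
  intro y _
  exact ha y trivial

lemma ext_and (M : Model) (φ ψ : Fm) :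
    (M.interp (.and φ ψ)).ext = (M.interp φ).ext ∩ (M.interp ψ).ext := rfl

lemma sv_and_left (φ ψ : Fm) : SeqValid (.and φ ψ) φ :=
  fun _ _ ha => ha.1

lemma sv_and_right (φ ψ : Fm) : SeqValid (.and φ ψ) ψ :=
  fun _ _ ha => ha.2

lemma sv_and_intro {φ ψ χ : Fm} (h1 : SeqValid φ ψ) (h2 : SeqValid φ χ) :
    SeqValid φ (.and ψ χ) := fun M a ha => ⟨h1 M ha, h2 M ha⟩

lemma sv_or_inl (φ ψ : Fm) : SeqValid φ (.or φ ψ) := by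
  intro M a ha
  intro y hy
  have : a ∈ M.P.dn (M.interp φ).int := by rw [(M.interp φ).dn_int]; exact ha
  exact this y hy.1

lemma sv_or_inr (φ ψ : Fm) : SeqValid ψ (.or φ ψ) := by
  intro M a ha
  intro y hy
  have : a ∈ M.P.dn (M.interp ψ).int := by rw [(M.interp ψ).dn_int]; exact ha
  exact this y hy.2

lemma sv_or_elim {φ ψ χ : Fm} (h1 : SeqValid φ χ) (h2 : SeqValid ψ χ) :
    SeqValid (.or φ ψ) χ := by
  intro M a ha
  have hiφ : (M.interp χ).int ⊆ (M.interp φ).int := by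
    rw [← (M.interp χ).up_ext, ← (M.interp φ).up_ext]
    exact M.P.up_anti (h1 M)
  have hiψ : (M.interp χ).int ⊆ (M.interp ψ).int := by
    rw [← (M.interp χ).up_ext, ← (M.interp ψ).up_ext]
    exact M.P.up_anti (h2 M)
  show a ∈ (M.interp χ).ext
  rw [← (M.interp χ).dn_int]
  intro y hy
  exact ha y ⟨hiφ hy, hiψ hy⟩

/-! ### Derived rules of cumulative consequence -/

/-- The And rule, derivable from (CM), (Cut) and (RW). -/
lemma cum_and {R : Fm → Fm → Prop} (h : IsCumulative R) {χ φ ψ : Fm}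
    (hφ : R χ φ) (hψ : R χ ψ) : R χ (.and φ ψ) := by
  have s1 : R (.and χ φ) ψ := h.cm χ φ ψ hφ hψ
  have s2 : R (.and (.and χ φ) ψ) (.and φ ψ) :=
    h.rw _ _ _ (sv_and_intro (sv_trans (sv_and_left _ _) (sv_and_right _ _))
      (sv_and_right _ _)) (h.refl _)
  have s3 : R (.and χ φ) (.and φ ψ) := h.cut _ _ _ s2 s1
  exact h.cut _ _ _ s3 hφ

/-! ### A supernormal pointed model built from filters -/

/-- The set of semantic consequences of φ. -/
def Up (φ : Fm) : Set Fm := {ψ | SeqValid φ ψ}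

/-- A filter of formulas w.r.t. semantic consequence. -/
def IsFilter (F : Set Fm) : Prop :=
  Fm.top ∈ F ∧ (∀ ⦃α β⦄, α ∈ F → β ∈ F → Fm.and α β ∈ F) ∧
    (∀ ⦃α β⦄, α ∈ F → SeqValid α β → β ∈ F)

lemma isFilter_Up (φ : Fm) : IsFilter (Up φ) :=
  ⟨sv_top φ, fun _ _ hα hβ => sv_and_intro hα hβ, fun _ _ hα hαβ => sv_trans hα hαβ⟩

/-- The filter polarity: objects are filters, features are formulas. -/
def FiltP : Polarity where
  Obj := {F : Set Fm // IsFilter F}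
  Feat := Fm
  I := fun F ψ => ψ ∈ F.val

/-- The concept of a formula in the filter polarity. -/
def cOf (φ : Fm) : Concept FiltP where
  ext := {F | φ ∈ F.val}
  int := Up φ
  up_ext := by
    apply Set.Subset.antisymm
    · intro ψ hψ
      exact hψ ⟨Up φ, isFilter_Up φ⟩ (sv_refl φ)
    · intro ψ hψ F hF
      exact F.2.2.2 hF hψ
  dn_int := by
    apply Set.Subset.antisymm
    · intro F hF
      exact hF φ (sv_refl φ)
    · intro F hF ψ hψ
      exact F.2.2.2 hF hψ

/-- Concepts are determined by their extensions. -/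
lemma Concept.ext_injective {P : Polarity} {c d : Concept P}
    (hext : c.ext = d.ext) : c = d := by
  obtain ⟨ce, ci, hcu, hcd⟩ := c
  obtain ⟨de, di, hdu, hdd⟩ := d
  simp only at hext
  subst hext
  have : ci = di := by rw [← hcu, ← hdu]
  subst this
  rfl

/-- The canonical filter model. -/
def canM : Model where
  P := FiltP
  V := fun n => cOf (.var n)

lemma canM_interp : ∀ ψ : Fm, canM.interp ψ = cOf ψ := by
  intro ψ
  induction ψ with
  | var n => rfl
  | bot =>
    apply Concept.ext_injective
    apply Set.Subset.antisymm
    · intro F hF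
      exact hF Fm.bot trivial
    · intro F hF y _
      exact F.2.2.2 hF (sv_bot y)
  | top =>
    apply Concept.ext_injective
    apply Set.Subset.antisymm
    · intro F _
      exact F.2.1
    · intro F _
      trivial
  | and φ ψ ihφ ihψ =>
    apply Concept.ext_injective
    show (canM.interp φ).ext ∩ (canM.interp ψ).ext = _
    rw [ihφ, ihψ]
    apply Set.Subset.antisymm
    · rintro F ⟨h1, h2⟩
      exact F.2.2.1 h1 h2
    · intro F hF
      exact ⟨F.2.2.2 hF (sv_and_left φ ψ), F.2.2.2 hF (sv_and_right φ ψ)⟩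
  | or φ ψ ihφ ihψ =>
    apply Concept.ext_injective
    show FiltP.dn ((canM.interp φ).int ∩ (canM.interp ψ).int) = _
    rw [ihφ, ihψ]
    have hU : (cOf φ).int ∩ (cOf ψ).int = Up (.or φ ψ) := by
      apply Set.Subset.antisymm
      · rintro χ ⟨h1, h2⟩
        exact sv_or_elim h1 h2
      · intro χ hχ
        exact ⟨sv_trans (sv_or_inl φ ψ) hχ, sv_trans (sv_or_inr φ ψ) hχ⟩
    rw [hU]
    apply Set.Subset.antisymm
    · intro F hF
      exact hF _ (sv_refl _)
    · intro F hF χ hχ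
      exact F.2.2.2 hF hχ

/-- Existence of a supernormal pointed model. -/
lemma exists_supernormal {R : Fm → Fm → Prop} (h : IsCumulative R) (φ : Fm) :
    ∃ Ma : PointedModel, SupernormalFor R Ma φ := by
  have hfil : IsFilter {ψ | R φ ψ} := by
    refine ⟨h.rw φ .top φ (sv_top φ) (h.refl φ), ?_, ?_⟩
    · intro α β hα hβ
      exact cum_and h hα hβ
    · intro α β hα hαβ
      exact h.rw α β φ hαβ hα
  refine ⟨⟨canM, ⟨{ψ | R φ ψ}, hfil⟩⟩, ?_⟩
  intro ψ
  show R φ ψ ↔ (⟨{ψ | R φ ψ}, hfil⟩ : FiltP.Obj) ∈ (canM.interp ψ).ext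
  rw [canM_interp ψ]
  exact Iff.rfl

/-- in the canonical model, the state φ/∼ is the minimum of φ̂. -/
theorem canonical_state_is_minimum (R : Fm → Fm → Prop)
    (h : IsCumulative R) (φ : Fm) :
    IsMinimum (canonicalFrame R).prec ((canonicalFrame R).hat φ)
      (canonicalState R φ) := by
  constructor
  · -- φ/∼ ∈ φ̂
    rintro Ma ⟨ψ, hψ, hnorm⟩
    have hφ : φ ∈ cls R ψ := by
      rw [← hψ]
      exact ⟨h.refl φ, h.refl φ⟩
    exact hnorm φ hφ.1
  · -- for every s ∈ φ̂ with s ≠ φ/∼, φ/∼ ≺ s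
    intro s hs hne
    obtain ⟨ψ₀, hψ₀⟩ := s.2
    obtain ⟨Ma, hMa⟩ := exists_supernormal h ψ₀
    have hMal : Ma ∈ (canonicalFrame R).l s :=
      ⟨ψ₀, hψ₀, fun χ hχ => (hMa χ).1 hχ⟩
    have hsatφ : Ma.sat φ := hs Ma hMal
    have hRψ₀φ : R ψ₀ φ := (hMa φ).2 hsatφ
    refine ⟨⟨φ, ⟨h.refl φ, h.refl φ⟩, ψ₀, ?_, hRψ₀φ⟩, fun heq => hne heq.symm⟩
    rw [hψ₀]
    exact ⟨h.refl ψ₀, h.refl ψ₀⟩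

end DR
end

section
/- Let |~ be a conceptual cumulative consequence relation and 𝓜 its canonical model. Then for all formulas φ, ψ: φ |~ ψ if and only if φ |~_𝓜 ψ. -/
namespace DR

/-!
In the canonical model the state ρ/∼ satisfies exactly the plausible consequences of ρ: the
consequences of ρ form a filter of the Lindenbaum lattice, so the model of all such filters,
pointed at it, is a normal model for ρ satisfying nothing more. Hence ρ/∼ ∈ φ̂ iff ρ |~ φ, and
then φ/∼ ≤ ρ/∼. Conversely ρ/∼ ≤ φ/∼ together with ρ |~ φ forces ρ ∼ φ, by (Reciprocity).
So φ/∼ is the unique minimal state of φ̂, and φ |~_𝓜 ψ says exactly that φ/∼ ∈ ψ̂.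
-/

namespace SeqValid

lemma refl (φ : Fm) : SeqValid φ φ := fun _ => subset_rfl

lemma trans {a b c : Fm} (hab : SeqValid a b) (hbc : SeqValid b c) : SeqValid a c :=
  fun M => (hab M).trans (hbc M)

lemma top (φ : Fm) : SeqValid φ .top := fun _ => Set.subset_univ _

lemma bot (φ : Fm) : SeqValid .bot φ := fun M => by
  rw [← (M.interp φ).dn_int]
  exact M.P.dn_anti (Set.subset_univ _)

lemma and_left (a b : Fm) : SeqValid (a.and b) a := fun _ => Set.inter_subset_left

lemma and_right (a b : Fm) : SeqValid (a.and b) b := fun _ => Set.inter_subset_right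

lemma and_intro {a b c : Fm} (hca : SeqValid c a) (hcb : SeqValid c b) :
    SeqValid c (a.and b) :=
  fun M => Set.subset_inter (hca M) (hcb M)

lemma and_comm (a b : Fm) : SeqValid (a.and b) (b.and a) :=
  and_intro (and_right a b) (and_left a b)

lemma or_left (a b : Fm) : SeqValid a (a.or b) := fun M => by
  rw [← (M.interp a).dn_int]
  exact M.P.dn_anti Set.inter_subset_left

lemma or_right (a b : Fm) : SeqValid b (a.or b) := fun M => by
  rw [← (M.interp b).dn_int]
  exact M.P.dn_anti Set.inter_subset_right

lemma or_elim {a b c : Fm} (hac : SeqValid a c) (hbc : SeqValid b c) :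
    SeqValid (a.or b) c := fun M => by
  rw [← (M.interp c).dn_int]
  apply M.P.dn_anti
  rw [← (M.interp a).up_ext, ← (M.interp b).up_ext, ← (M.interp c).up_ext]
  exact Set.subset_inter (M.P.up_anti (hac M)) (M.P.up_anti (hbc M))

end SeqValid

/-- A filter of the Lindenbaum lattice of 𝓛. -/
structure IsTheory (T : Set Fm) : Prop where
  top_mem : Fm.top ∈ T
  mem_of_seqValid {a b : Fm} : a ∈ T → SeqValid a b → b ∈ T
  and_mem {a b : Fm} : a ∈ T → b ∈ T → a.and b ∈ T

def principal (χ : Fm) : Set Fm := {x | SeqValid χ x}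

lemma isTheory_principal (χ : Fm) : IsTheory (principal χ) where
  top_mem := SeqValid.top χ
  mem_of_seqValid := SeqValid.trans
  and_mem := SeqValid.and_intro

lemma principal_or (a b : Fm) : principal (a.or b) = principal a ∩ principal b :=
  Set.ext fun _ =>
    ⟨fun h => ⟨(SeqValid.or_left a b).trans h, (SeqValid.or_right a b).trans h⟩,
      fun h => SeqValid.or_elim h.1 h.2⟩

def theoryPolarity : Polarity where
  Obj := {T : Set Fm // IsTheory T}
  Feat := Fm
  I := fun T x => x ∈ T.val

lemma theoryPolarity_up (χ : Fm) :
    theoryPolarity.up {T | χ ∈ T.val} = principal χ :=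
  Set.ext fun _ =>
    ⟨fun hx => hx ⟨principal χ, isTheory_principal χ⟩ (SeqValid.refl χ),
      fun hx T hT => T.prop.mem_of_seqValid hT hx⟩

lemma theoryPolarity_dn_principal (χ : Fm) :
    theoryPolarity.dn (principal χ) = {T | χ ∈ T.val} :=
  Set.ext fun T =>
    ⟨fun hT => hT χ (SeqValid.refl χ), fun hT _ hx => T.prop.mem_of_seqValid hT hx⟩

def theoryModel : Model where
  P := theoryPolarity
  V n := ⟨{T | Fm.var n ∈ T.val}, principal (.var n), theoryPolarity_up _,
    theoryPolarity_dn_principal _⟩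

lemma theoryModel_ext (χ : Fm) : (theoryModel.interp χ).ext = {T | χ ∈ T.val} := by
  induction χ with
  | var n => rfl
  | bot =>
    exact Set.ext fun T =>
      ⟨fun hT => hT .bot trivial, fun hT x _ => T.prop.mem_of_seqValid hT (SeqValid.bot x)⟩
  | top => exact Set.ext fun T => ⟨fun _ => T.prop.top_mem, fun _ => trivial⟩
  | and a b iha ihb =>
    show (theoryModel.interp a).ext ∩ (theoryModel.interp b).ext = _
    rw [iha, ihb]
    exact Set.ext fun T =>
      ⟨fun hT => T.prop.and_mem hT.1 hT.2,
        fun hT => ⟨T.prop.mem_of_seqValid hT (SeqValid.and_left a b),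
          T.prop.mem_of_seqValid hT (SeqValid.and_right a b)⟩⟩
  | or a b iha ihb =>
    show theoryPolarity.dn ((theoryModel.interp a).int ∩ (theoryModel.interp b).int) = _
    rw [← (theoryModel.interp a).up_ext, ← (theoryModel.interp b).up_ext, iha, ihb]
    show theoryPolarity.dn
      (theoryPolarity.up {T | a ∈ T.val} ∩ theoryPolarity.up {T | b ∈ T.val}) = _
    rw [theoryPolarity_up, theoryPolarity_up]
    exact (congrArg theoryPolarity.dn (principal_or a b).symm).trans
      (theoryPolarity_dn_principal _)

lemma exists_eq_canonicalState {R : Fm → Fm → Prop} (s : (canonicalFrame R).S) :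
    ∃ ρ, s = canonicalState R ρ :=
  let ⟨ρ, hρ⟩ := s.prop
  ⟨ρ, Subtype.ext hρ⟩

namespace IsCumulative

variable {R : Fm → Fm → Prop}

lemma conseq_and (h : IsCumulative R) {φ a b : Fm} (ha : R φ a) (hb : R φ b) :
    R φ (a.and b) := by
  have hab : R ((φ.and a).and b) (a.and b) :=
    h.rw _ _ _ (SeqValid.and_intro ((SeqValid.and_left _ b).trans (SeqValid.and_right φ a))
      (SeqValid.and_right _ b)) (h.refl _)
  exact h.cut _ _ _ (h.cut _ _ _ hab (h.cm φ a b ha hb)) ha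

lemma reciprocity (h : IsCumulative R) {a b x : Fm} (hab : R a b) (hba : R b a) (hx : R a x) :
    R b x :=
  h.cut b a x
    (h.lle _ _ _ (SeqValid.and_comm a b) (SeqValid.and_comm b a) (h.cm a b x hab hx)) hba

lemma isTheory_conseq (h : IsCumulative R) (φ : Fm) : IsTheory {x | R φ x} where
  top_mem := h.rw φ .top φ (SeqValid.top φ) (h.refl φ)
  mem_of_seqValid ha hab := h.rw _ _ φ hab ha
  and_mem := h.conseq_and

lemma exists_supernormalFor (h : IsCumulative R) (φ : Fm) : ∃ Ma, SupernormalFor R Ma φ :=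
  ⟨⟨theoryModel, ⟨{x | R φ x}, h.isTheory_conseq φ⟩⟩, fun χ => by
    show _ ↔ _ ∈ (theoryModel.interp χ).ext
    rw [theoryModel_ext]
    rfl⟩

lemma mem_cls_self (h : IsCumulative R) (φ : Fm) : φ ∈ cls R φ := ⟨h.refl φ, h.refl φ⟩

lemma cls_eq_iff (h : IsCumulative R) {a b : Fm} : cls R a = cls R b ↔ R a b ∧ R b a := by
  refine ⟨fun hab => (hab ▸ h.mem_cls_self b : b ∈ cls R a), fun ⟨hab, hba⟩ => Set.ext fun _ => ?_⟩
  exact ⟨fun ⟨hax, hxa⟩ => ⟨h.reciprocity hab hba hax, h.reciprocity hax hxa hab⟩,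
    fun ⟨hbx, hxb⟩ => ⟨h.reciprocity hba hab hbx, h.reciprocity hbx hxb hba⟩⟩

lemma mem_hat_canonicalState_iff (h : IsCumulative R) (ρ χ : Fm) :
    canonicalState R ρ ∈ (canonicalFrame R).hat χ ↔ R ρ χ := by
  refine ⟨fun hsat => ?_, fun hχ Ma ⟨ρ', hρρ', hMa⟩ => ?_⟩
  · obtain ⟨Ma, hMa⟩ := h.exists_supernormalFor ρ
    exact (hMa χ).2 (hsat Ma ⟨ρ, rfl, fun ψ hψ => (hMa ψ).1 hψ⟩)
  · obtain ⟨hρ, hρ'⟩ := h.cls_eq_iff.1 hρρ'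
    exact hMa χ (h.reciprocity hρ hρ' hχ)

lemma clsLE_cls_of_conseq (h : IsCumulative R) {a b : Fm} (hba : R b a) :
    clsLE R (cls R a) (cls R b) :=
  ⟨a, h.mem_cls_self a, b, h.mem_cls_self b, hba⟩

lemma canonicalState_eq_of_clsLE (h : IsCumulative R) {ρ φ : Fm}
    (hle : clsLE R (cls R ρ) (cls R φ)) (hρφ : R ρ φ) :
    canonicalState R ρ = canonicalState R φ := by
  obtain ⟨χ, ⟨hρχ, hχρ⟩, φ', ⟨hφφ', hφ'φ⟩, hφ'χ⟩ := hle
  have hφχ : R φ χ := h.reciprocity hφ'φ hφφ' hφ'χ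
  have hχφ : R χ φ := h.reciprocity hρχ hχρ hρφ
  exact Subtype.ext ((h.cls_eq_iff.2 ⟨hρχ, hχρ⟩).trans (h.cls_eq_iff.2 ⟨hχφ, hφχ⟩))

lemma minimalIn_hat_iff (h : IsCumulative R) (φ : Fm) (s : (canonicalFrame R).S) :
    MinimalIn (canonicalFrame R).prec ((canonicalFrame R).hat φ) s ↔
      s = canonicalState R φ := by
  have hφ := (h.mem_hat_canonicalState_iff φ φ).2 (h.refl φ)
  constructor
  · rintro ⟨hs, hmin⟩
    obtain ⟨ρ, rfl⟩ := exists_eq_canonicalState s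
    by_contra hne
    exact hmin _ hφ
      ⟨h.clsLE_cls_of_conseq ((h.mem_hat_canonicalState_iff ρ φ).1 hs), Ne.symm hne⟩
  · rintro rfl
    refine ⟨hφ, fun t ht ⟨hle, hne⟩ => ?_⟩
    obtain ⟨ρ, rfl⟩ := exists_eq_canonicalState t
    exact hne (h.canonicalState_eq_of_clsLE hle ((h.mem_hat_canonicalState_iff ρ φ).1 ht))

end IsCumulative

/-- φ |~ ψ iff φ |~_𝓜 ψ in the canonical model 𝓜. -/
theorem canonical_conseq_iff (R : Fm → Fm → Prop) (h : IsCumulative R)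
    (φ ψ : Fm) :
    R φ ψ ↔ (canonicalFrame R).conseq φ ψ := by
  calc R φ ψ ↔ canonicalState R φ ∈ (canonicalFrame R).hat ψ :=
        (h.mem_hat_canonicalState_iff φ ψ).symm
    _ ↔ (canonicalFrame R).conseq φ ψ := by
        simp only [Frame.conseq, h.minimalIn_hat_iff, forall_eq]

end DR
end
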